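/- Let D be β-Lipschitz with β < 1, let ∇g_α be L-Lipschitz in x uniformly in α and satisfy ‖∇g_{α₁}(x) - ∇g_{α₂}(x)‖ ≤ M|α₁ - α₂| for all x (with M ≤ L in normalized settings). If τ > 0 satisfies β(1 + τL) < 1, then the unique fixed points x̂_α of T_α(x) = D(x - τ∇g_α(x)) form a Lipschitz path: ‖x̂_{α₁} - x̂_{α₂}‖ ≤ (βτM / (1 - β(1+τL)))·|α₁ - α₂| for all α₁, α₂ ∈ [0,1]. -/
import Mathlib


open Set

/-- main theorem, smooth path of unrolled solutions: with D β-Lipschitz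
(β < 1), ∇g_α L-Lipschitz in x uniformly in α, α ↦ ∇g_α(x) M-Lipschitz uniformly in x,
and β(1 + τL) < 1, the fixed points x̂_α of T_α(x) = D(x - τ∇g_α(x)) satisfy
‖x̂_{α₁} - x̂_{α₂}‖ ≤ (βτM / (1 - β(1+τL)))·|α₁ - α₂|. -/
theorem stmt7 {n : ℕ} (D : EuclideanSpace ℝ (Fin n) → EuclideanSpace ℝ (Fin n))
    (g' : ℝ → EuclideanSpace ℝ (Fin n) → EuclideanSpace ℝ (Fin n))
    (β L M τ : ℝ) (hβ0 : 0 ≤ β) (hβ : β < 1) (hL : 0 ≤ L) (hM : 0 ≤ M) (hτ : 0 < τ)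
    (hD : ∀ u v : EuclideanSpace ℝ (Fin n), ‖D u - D v‖ ≤ β * ‖u - v‖)
    (hgx : ∀ α ∈ Icc (0 : ℝ) 1, ∀ x₁ x₂ : EuclideanSpace ℝ (Fin n),
      ‖g' α x₁ - g' α x₂‖ ≤ L * ‖x₁ - x₂‖)
    (hgα : ∀ x : EuclideanSpace ℝ (Fin n), ∀ α₁ ∈ Icc (0 : ℝ) 1, ∀ α₂ ∈ Icc (0 : ℝ) 1,
      ‖g' α₁ x - g' α₂ x‖ ≤ M * |α₁ - α₂|)
    (hc : β * (1 + τ * L) < 1)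
    (xhat : ℝ → EuclideanSpace ℝ (Fin n))
    (hfix : ∀ α ∈ Icc (0 : ℝ) 1, D (xhat α - τ • g' α (xhat α)) = xhat α) :
    ∀ α₁ ∈ Icc (0 : ℝ) 1, ∀ α₂ ∈ Icc (0 : ℝ) 1,
      ‖xhat α₁ - xhat α₂‖ ≤ (β * τ * M / (1 - β * (1 + τ * L))) * |α₁ - α₂| := by
  intro α₁ h₁ α₂ h₂
  set x₁ := xhat α₁
  set x₂ := xhat α₂
  have key : ‖x₁ - x₂‖ ≤ β * (1 + τ * L) * ‖x₁ - x₂‖ + β * τ * M * |α₁ - α₂| := by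
    have h : x₁ - x₂ = D (x₁ - τ • g' α₁ x₁) - D (x₂ - τ • g' α₂ x₂) := by
      rw [hfix α₁ h₁, hfix α₂ h₂]
    calc ‖x₁ - x₂‖ = ‖D (x₁ - τ • g' α₁ x₁) - D (x₂ - τ • g' α₂ x₂)‖ := by rw [← h]
      _ ≤ β * ‖(x₁ - τ • g' α₁ x₁) - (x₂ - τ • g' α₂ x₂)‖ := hD _ _
      _ ≤ β * (‖x₁ - x₂‖ + τ * ‖g' α₁ x₁ - g' α₁ x₂‖ + τ * ‖g' α₁ x₂ - g' α₂ x₂‖) := by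
          apply mul_le_mul_of_nonneg_left _ hβ0
          have : (x₁ - τ • g' α₁ x₁) - (x₂ - τ • g' α₂ x₂)
              = (x₁ - x₂) - τ • (g' α₁ x₁ - g' α₁ x₂) - τ • (g' α₁ x₂ - g' α₂ x₂) := by
            simp [smul_sub]; abel
          rw [this]
          calc ‖(x₁ - x₂) - τ • (g' α₁ x₁ - g' α₁ x₂) - τ • (g' α₁ x₂ - g' α₂ x₂)‖
              ≤ ‖(x₁ - x₂) - τ • (g' α₁ x₁ - g' α₁ x₂)‖ + ‖τ • (g' α₁ x₂ - g' α₂ x₂)‖ :=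
                norm_sub_le _ _
            _ ≤ ‖x₁ - x₂‖ + ‖τ • (g' α₁ x₁ - g' α₁ x₂)‖ + ‖τ • (g' α₁ x₂ - g' α₂ x₂)‖ := by
                gcongr; exact norm_sub_le _ _
            _ = ‖x₁ - x₂‖ + τ * ‖g' α₁ x₁ - g' α₁ x₂‖ + τ * ‖g' α₁ x₂ - g' α₂ x₂‖ := by
                rw [norm_smul, norm_smul, Real.norm_eq_abs, abs_of_pos hτ]
      _ ≤ β * (‖x₁ - x₂‖ + τ * (L * ‖x₁ - x₂‖) + τ * (M * |α₁ - α₂|)) := by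
          apply mul_le_mul_of_nonneg_left _ hβ0
          gcongr
          · exact hgx α₁ h₁ x₁ x₂
          · exact hgα x₂ α₁ h₁ α₂ h₂
      _ = β * (1 + τ * L) * ‖x₁ - x₂‖ + β * τ * M * |α₁ - α₂| := by ring
  have hden : 0 < 1 - β * (1 + τ * L) := by linarith
  rw [div_mul_eq_mul_div, le_div_iff₀ hden]
  nlinarith [key]
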